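/- Let k be a nonzero integer, let R be a commutative ring in which the image of k is invertible, and let v be an element of R such that 1 − v is nilpotent (so that v is a unit of R). Then the evaluation t_k(v) of the Bott polynomial t_k at v is a unit of R. (Applied to R = ℤ[1/k] ⊗ K₀(X) and v = [L^∨] for a line bundle L on a scheme with an ample line bundle, this shows that the Bott class θ^k(L) = t_k([L^∨]) is invertible.) -/

import Mathlib

/-!
Over the domain `ℤ[T,T⁻¹]` the factor `1 - T` can be cancelled, so `t_k` is the geometric sum
`1 + T + ⋯ + T^(k-1)` when `k ≥ 0`, and `-T^k (1 + T + ⋯ + T^(-k-1))` when `k < 0`. Since `1 - v`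
is nilpotent, each `v^i` is congruent to `1` modulo the nilradical, so the geometric sum evaluated
at `v` is congruent to the unit `|k|`, hence is itself a unit.
-/

open LaurentPolynomial Finset

theorem isUnit_geom_sum_of_isNilpotent_one_sub {R : Type*} [CommRing R] {v : R}
    (hv : IsNilpotent (1 - v)) {n : ℕ} (hn : IsUnit (n : R)) :
    IsUnit (∑ i ∈ range n, v ^ i) := by
  obtain ⟨c, hc⟩ : 1 - v ∣ ∑ i ∈ range n, (1 - v ^ i) :=
    dvd_sum fun i _ => one_sub_dvd_one_sub_pow v i
  have hnil : IsNilpotent (-∑ i ∈ range n, (1 - v ^ i)) := by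
    rw [hc]
    exact ((Commute.all _ _).isNilpotent_mul_right hv).neg
  have hsum : ∑ i ∈ range n, v ^ i = n + -∑ i ∈ range n, (1 - v ^ i) := by
    simp [sum_sub_distrib]
  rw [hsum]
  exact hnil.isUnit_add_left_of_commute hn (Commute.all _ _)

namespace LaurentPolynomial

theorem one_sub_T_one_ne_zero {R : Type*} [Ring R] [Nontrivial R] :
    (1 - T 1 : R[T;T⁻¹]) ≠ 0 := by
  refine sub_ne_zero.mpr fun h => ?_
  simpa [← T_zero] using congrArg (fun p : R[T;T⁻¹] => p.coeff 1) h

section Domain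

variable {R : Type*} [CommRing R] [IsDomain R] {t : R[T;T⁻¹]} (n : ℕ)

theorem eq_geom_sum_of_one_sub_T_mul_eq (ht : (1 - T 1) * t = 1 - T n) :
    t = ∑ i ∈ range n, T 1 ^ i :=
  mul_left_cancel₀ one_sub_T_one_ne_zero (by rw [ht, mul_neg_geom_sum, T_pow, mul_one])

theorem eq_neg_T_mul_geom_sum_of_one_sub_T_mul_eq (ht : (1 - T 1) * t = 1 - T (-n)) :
    t = -(T (-n) * ∑ i ∈ range n, T 1 ^ i) := by
  refine mul_left_cancel₀ one_sub_T_one_ne_zero ?_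
  have hinv : (T (-n) * T n : R[T;T⁻¹]) = 1 := by rw [← T_add, neg_add_cancel, T_zero]
  have hgeom := mul_neg_geom_sum (T 1 : R[T;T⁻¹]) n
  rw [T_pow, mul_one] at hgeom
  linear_combination ht + T (-n) * hgeom - hinv

end Domain

end LaurentPolynomial

theorem bott_polynomial_eval_isUnit_general (k : ℤ)
    (R : Type*) [CommRing R] (hkR : IsUnit (k : R))
    (v : R) (hv : IsNilpotent (1 - v))
    (f : LaurentPolynomial ℤ →+* R) (hf : f (T 1) = v)
    (t : LaurentPolynomial ℤ) (ht : (1 - T 1) * t = 1 - T k) :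
    IsUnit (f t) := by
  have hgeom (n : ℕ) (hn : IsUnit (n : R)) : IsUnit (f (∑ i ∈ range n, T 1 ^ i)) := by
    simpa only [map_sum, map_pow, hf] using isUnit_geom_sum_of_isNilpotent_one_sub hv hn
  obtain ⟨n, rfl | rfl⟩ := Int.eq_nat_or_neg k
  · rw [eq_geom_sum_of_one_sub_T_mul_eq n ht]
    exact hgeom n (by exact_mod_cast hkR)
  · rw [eq_neg_T_mul_geom_sum_of_one_sub_T_mul_eq n ht, map_neg, map_mul]
    exact (((isUnit_T _).map f).mul (hgeom n (by simpa using hkR.neg))).neg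

/-- Let `k` be a nonzero integer, `R` a commutative ring in which `k` is invertible, and
`v ∈ R` with `1 - v` nilpotent. Then the evaluation `t_k(v)` of the Bott polynomial
(the unique Laurent polynomial with `(1 - T) * t_k = 1 - T^k`) at `v`, i.e. its image
under any ring homomorphism `ℤ[T,T⁻¹] → R` sending `T` to `v`, is a unit of `R`. -/
theorem bott_polynomial_eval_isUnit (k : ℤ) (hk : k ≠ 0)
    (R : Type*) [CommRing R] (hkR : IsUnit (k : R))
    (v : R) (hv : IsNilpotent (1 - v))
    (f : LaurentPolynomial ℤ →+* R) (hf : f (T 1) = v)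
    (t : LaurentPolynomial ℤ) (ht : (1 - T 1) * t = 1 - T k) :
    IsUnit (f t) :=
  bott_polynomial_eval_isUnit_general k R hkR v hv f hf t ht
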